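/- arXiv:0707.2440 — 6 statements merged into one kernel-verified Lean document; each statement's English description precedes it below -/
import Mathlib

section
/- Let G be an invertible symmetric 6×6 complex matrix, SO(G) = {g ∈ GL(6,ℂ) : gᵀGg = G, det g = 1}, and let F be a symmetric 6×6 complex matrix not a scalar multiple of G (so X = F ∩ G is a quadratic complex). If the binary sextic Δ(λ,μ) = det(λF + μG) has at least two distinct roots in ℙ¹ (equivalently, the Segre symbol of X consists of at least two brackets), then 0 does not lie in the closure of the orbit {[gᵀFg] : g ∈ SO(G)} of the class of F in the quotient vector space Sym₆(ℂ)/ℂ·G; that is, the quadratic complex X is semistable with respect to the action of SO(G). -/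
open Matrix Filter

set_option maxRecDepth 100000
set_option maxHeartbeats 1000000

/-- Entry-wise convergence criterion for matrices. -/
private lemma matrix_tendsto_of_entries {u : ℕ → Matrix (Fin 6) (Fin 6) ℂ}
    (h : ∀ i j, Tendsto (fun n => u n i j) atTop (nhds 0)) :
    Tendsto u atTop (nhds (0 : Matrix (Fin 6) (Fin 6) ℂ)) := by
  have : Tendsto u atTop (nhds (0 : Fin 6 → Fin 6 → ℂ)) := by
    refine tendsto_pi_nhds.mpr ?_
    intro i
    rw [tendsto_pi_nhds]
    intro j
    simpa using h i j
  exact this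

private lemma matrix_entry_tendsto {u : ℕ → Matrix (Fin 6) (Fin 6) ℂ}
    (h : Tendsto u atTop (nhds (0 : Matrix (Fin 6) (Fin 6) ℂ))) (i j : Fin 6) :
    Tendsto (fun n => u n i j) atTop (nhds 0) := by
  have h' : Tendsto u atTop (nhds (0 : Fin 6 → Fin 6 → ℂ)) := h
  have := (tendsto_pi_nhds.mp ((tendsto_pi_nhds.mp h') i)) j
  simpa using this

/-- If `u n → 0` and `det (u n + ν n • G) = 0` with `det G ≠ 0`, then `ν n → 0`. -/
private lemma tendsto_root_zero {G : Matrix (Fin 6) (Fin 6) ℂ} (hG : G.det ≠ 0)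
    {u : ℕ → Matrix (Fin 6) (Fin 6) ℂ} (hu : Tendsto u atTop (nhds 0))
    (ν : ℕ → ℂ) (hν : ∀ n, (u n + ν n • G).det = 0) :
    Tendsto ν atTop (nhds 0) := by
  by_contra hnot
  -- extract ε > 0 and a subsequence with |ν n| ≥ ε
  rw [Metric.tendsto_atTop] at hnot
  push_neg at hnot
  obtain ⟨ε, hε, hfreq⟩ := hnot
  have hfreq' : ∃ᶠ n in atTop, ε ≤ ‖ν n‖ := by
    rw [frequently_atTop]
    intro N
    obtain ⟨n, hn, hdist⟩ := hfreq N
    refine ⟨n, hn, ?_⟩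
    simpa [Complex.dist_eq] using hdist
  obtain ⟨φ, hφmono, hφ⟩ := extraction_of_frequently_atTop hfreq'
  have hνne : ∀ k, ν (φ k) ≠ 0 := by
    intro k h0
    have := hφ k
    rw [h0] at this
    simp at this
    linarith
  -- the scaled sequence v k = (ν (φ k))⁻¹ • u (φ k) tends to 0
  set v : ℕ → Matrix (Fin 6) (Fin 6) ℂ := fun k => (ν (φ k))⁻¹ • u (φ k) with hv
  have hulim : Tendsto (fun k => u (φ k)) atTop (nhds 0) :=
    hu.comp hφmono.tendsto_atTop
  have hvlim : Tendsto v atTop (nhds 0) := by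
    apply matrix_tendsto_of_entries
    intro i j
    have hentry : Tendsto (fun k => u (φ k) i j) atTop (nhds 0) :=
      matrix_entry_tendsto hulim i j
    have hbound : ∀ k, ‖v k i j‖ ≤ ε⁻¹ * ‖u (φ k) i j‖ := by
      intro k
      have h1 : v k i j = (ν (φ k))⁻¹ * u (φ k) i j := rfl
      rw [h1, norm_mul, norm_inv]
      exact mul_le_mul_of_nonneg_right (inv_anti₀ hε (hφ k)) (norm_nonneg _)
    have hmul : Tendsto (fun k => ε⁻¹ * ‖u (φ k) i j‖) atTop (nhds 0) := by
      have := hentry.norm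
      simpa using this.const_mul ε⁻¹
    exact squeeze_zero_norm hbound hmul
  -- det (G + v k) = 0 for all k
  have hdet0 : ∀ k, (G + v k).det = 0 := by
    intro k
    have key : ν (φ k) • (G + v k) = u (φ k) + ν (φ k) • G := by
      show ν (φ k) • (G + (ν (φ k))⁻¹ • u (φ k)) = u (φ k) + ν (φ k) • G
      rw [smul_add, smul_smul, mul_inv_cancel₀ (hνne k), one_smul, add_comm]
    have h6 : (ν (φ k) • (G + v k)).det = ν (φ k) ^ 6 * (G + v k).det := by
      rw [Matrix.det_smul]
      norm_num
    have := hν (φ k)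
    rw [← key, h6] at this
    have hpow : ν (φ k) ^ 6 ≠ 0 := pow_ne_zero _ (hνne k)
    exact (mul_eq_zero.mp this).resolve_left hpow
  -- but det (G + v k) → det G ≠ 0
  have hdetlim : Tendsto (fun k => (G + v k).det) atTop (nhds G.det) := by
    have hadd : Tendsto (fun k => G + v k) atTop (nhds (G + 0)) :=
      tendsto_const_nhds.add hvlim
    have hcont : Continuous fun M : Matrix (Fin 6) (Fin 6) ℂ => M.det :=
      Continuous.matrix_det (continuous_id (X := Matrix (Fin 6) (Fin 6) ℂ))
    have h2 := (hcont.tendsto (G + 0)).comp hadd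
    rw [add_zero] at h2
    exact h2
  have : G.det = 0 := by
    have h0 : Tendsto (fun k => (G + v k).det) atTop (nhds 0) := by
      simp only [hdet0]
      exact tendsto_const_nhds
    exact tendsto_nhds_unique hdetlim h0
  exact hG this

/-- Semistability of a quadratic complex `X = F ∩ G`:
if the binary sextic `det(λF + μG)` has at least two distinct roots in `ℙ¹` (equivalently,
the Segre symbol of `X` consists of at least two brackets), then `0` does not lie in the
closure of the `SO(G)`-orbit of the class of `F` in the quotient vector space
`Sym₆(ℂ)/ℂ·G`. -/
theorem quadraticComplex_semistable
    (G F : Matrix (Fin 6) (Fin 6) ℂ) (hGs : G.IsSymm) (hGu : IsUnit G.det)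
    (hFs : F.IsSymm) (hF : ¬ ∃ c : ℂ, F = c • G)
    (hroots : ∃ p q : ℂ × ℂ, p ≠ 0 ∧ q ≠ 0 ∧
      (p.1 • F + p.2 • G).det = 0 ∧ (q.1 • F + q.2 • G).det = 0 ∧
      ¬ ∃ c : ℂ, q = c • p) :
    (0 : Matrix (Fin 6) (Fin 6) ℂ ⧸ Submodule.span ℂ {G}) ∉
      closure {x : Matrix (Fin 6) (Fin 6) ℂ ⧸ Submodule.span ℂ {G} |
        ∃ g : Matrix (Fin 6) (Fin 6) ℂ, gᵀ * G * g = G ∧ g.det = 1 ∧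
          x = Submodule.Quotient.mk (gᵀ * F * g)} := by
  classical
  intro h
  obtain ⟨p, q, hp, hq, hdp, hdq, hpq⟩ := hroots
  have hGdet : G.det ≠ 0 := hGu.ne_zero
  -- the first coordinates of p and q are nonzero
  have hfst : ∀ z : ℂ × ℂ, z ≠ 0 → (z.1 • F + z.2 • G).det = 0 → z.1 ≠ 0 := by
    intro z hz hd h1
    have hz2 : z.2 ≠ 0 := by
      intro h2
      exact hz (Prod.ext h1 h2)
    simp [h1, Matrix.det_smul] at hd
    rcases hd with h | h
    · exact hz2 h
    · exact hGdet h
  have hp1 : p.1 ≠ 0 := hfst p hp hdp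
  have hq1 : q.1 ≠ 0 := hfst q hq hdq
  -- the two affine roots
  set r : ℂ := p.2 / p.1 with hr
  set s : ℂ := q.2 / q.1 with hs
  have hPr : (F + r • G).det = 0 := by
    have : F + r • G = p.1⁻¹ • (p.1 • F + p.2 • G) := by
      rw [smul_add, smul_smul, smul_smul, inv_mul_cancel₀ hp1, one_smul, hr,
        div_eq_inv_mul, mul_comm]
    rw [this, Matrix.det_smul, hdp, mul_zero]
  have hPs : (F + s • G).det = 0 := by
    have : F + s • G = q.1⁻¹ • (q.1 • F + q.2 • G) := by
      rw [smul_add, smul_smul, smul_smul, inv_mul_cancel₀ hq1, one_smul, hs,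
        div_eq_inv_mul, mul_comm]
    rw [this, Matrix.det_smul, hdq, mul_zero]
  have hrs : r ≠ s := by
    intro hEq
    apply hpq
    refine ⟨q.1 / p.1, ?_⟩
    refine Prod.ext ?_ ?_
    · show q.1 = q.1 / p.1 * p.1
      exact (div_mul_cancel₀ q.1 hp1).symm
    · show q.2 = q.1 / p.1 * p.2
      have h1 : q.2 = s * q.1 := by
        rw [hs, div_mul_cancel₀ q.2 hq1]
      rw [h1, ← hEq, hr]
      field_simp
  -- pull the closure back through the open quotient map
  set N := Submodule.span ℂ {G} with hN
  set S := {x : Matrix (Fin 6) (Fin 6) ℂ ⧸ N |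
        ∃ g : Matrix (Fin 6) (Fin 6) ℂ, gᵀ * G * g = G ∧ g.det = 1 ∧
          x = Submodule.Quotient.mk (gᵀ * F * g)} with hS
  have hopen : IsOpenMap N.mkQ := Submodule.isOpenMap_mkQ N
  have h0 : (0 : Matrix (Fin 6) (Fin 6) ℂ) ∈ closure (N.mkQ ⁻¹' S) := by
    apply hopen.preimage_closure_subset_closure_preimage
    show N.mkQ 0 ∈ closure S
    rw [map_zero]
    exact h
  -- extract a convergent sequence
  haveI : FirstCountableTopology (Matrix (Fin 6) (Fin 6) ℂ) :=
    inferInstanceAs (FirstCountableTopology (Fin 6 → Fin 6 → ℂ))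
  obtain ⟨u, hu, hulim⟩ := mem_closure_iff_seq_limit.mp h0
  -- for each n choose g n and c n with u n = (g n)ᵀ F (g n) + c n • G
  have hchoice : ∀ n, ∃ (g : Matrix (Fin 6) (Fin 6) ℂ) (c : ℂ),
      gᵀ * G * g = G ∧ g.det = 1 ∧ u n = gᵀ * F * g + c • G := by
    intro n
    obtain ⟨g, hg1, hg2, hg3⟩ := hu n
    have : u n - gᵀ * F * g ∈ N := (Submodule.Quotient.eq N).mp hg3
    rw [hN, Submodule.mem_span_singleton] at this
    obtain ⟨c, hc⟩ := this
    exact ⟨g, c, hg1, hg2, by rw [hc]; abel⟩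
  choose g c hg1 hg2 hg3 using hchoice
  -- determinant invariance: det (u n + t • G) = det (F + (c n + t) • G)
  have hdetinv : ∀ (n : ℕ) (t : ℂ),
      (u n + t • G).det = (F + (c n + t) • G).det := by
    intro n t
    have key : u n + t • G = (g n)ᵀ * (F + (c n + t) • G) * g n := by
      rw [hg3 n]
      have hsm : (g n)ᵀ * ((c n + t) • G) * g n = (c n + t) • G := by
        rw [Matrix.mul_smul, Matrix.smul_mul, hg1 n]
      rw [Matrix.mul_add, Matrix.add_mul, hsm, add_smul]
      abel
    rw [key, Matrix.det_mul, Matrix.det_mul, Matrix.det_transpose, hg2 n,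
      one_mul, mul_one]
  -- both shifted roots tend to zero
  have hν1 : ∀ n, (u n + (r - c n) • G).det = 0 := by
    intro n
    rw [hdetinv n (r - c n)]
    have : c n + (r - c n) = r := by ring
    rw [this]
    exact hPr
  have hν2 : ∀ n, (u n + (s - c n) • G).det = 0 := by
    intro n
    rw [hdetinv n (s - c n)]
    have : c n + (s - c n) = s := by ring
    rw [this]
    exact hPs
  have ht1 : Tendsto (fun n => r - c n) atTop (nhds 0) :=
    tendsto_root_zero hGdet hulim _ hν1
  have ht2 : Tendsto (fun n => s - c n) atTop (nhds 0) :=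
    tendsto_root_zero hGdet hulim _ hν2
  have hdiff : Tendsto (fun n => (r - c n) - (s - c n)) atTop (nhds 0) := by
    have := ht1.sub ht2
    simpa using this
  have hconst : Tendsto (fun _ : ℕ => r - s) atTop (nhds (r - s)) :=
    tendsto_const_nhds
  have : r - s = 0 := by
    apply tendsto_nhds_unique hconst
    have heq : (fun _ : ℕ => r - s) = fun n => (r - c n) - (s - c n) := by
      funext n; ring
    rw [heq]
    exact hdiff
  exact hrs (sub_eq_zero.mp this)
end

section
/- Let e ≥ 1 and λ ∈ ℂ. Let G_e be the e×e complex matrix with (G_e)_{k,l} = 1 if k + l = e + 1 and 0 otherwise (ones on the antidiagonal), and let F_e be the e×e complex matrix with (F_e)_{k,l} = 1 if k + l = e, (F_e)_{k,l} = λ if k + l = e + 1, and 0 otherwise. If A is an e×e complex matrix satisfying AᵀG_eA = G_e and AᵀF_eA = F_e, then A = I_e or A = −I_e. -/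
open Matrix

/-- The matrix `G_e` of a block of the Segre normal form: ones on the antidiagonal
(`(G_e)_{k,l} = 1` iff `k + l = e + 1` in `1`-indexed notation). -/
noncomputable def segreG (e : ℕ) : Matrix (Fin e) (Fin e) ℂ :=
  Matrix.of fun k l => if (k : ℕ) + (l : ℕ) + 1 = e then 1 else 0

/-- The matrix `F_e` of a block of the Segre normal form: ones on the diagonal just above the
antidiagonal and `λ` on the antidiagonal (`(F_e)_{k,l} = 1` iff `k + l = e`, `= λ` iff
`k + l = e + 1`, in `1`-indexed notation). -/
noncomputable def segreF (e : ℕ) (lam : ℂ) : Matrix (Fin e) (Fin e) ℂ :=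
  Matrix.of fun k l =>
    if (k : ℕ) + (l : ℕ) + 2 = e then 1 else if (k : ℕ) + (l : ℕ) + 1 = e then lam else 0

lemma rev_comm {e : ℕ} (l x : Fin e) : l = x.rev ↔ x = l.rev := by
  constructor <;> (rintro rfl; simp [Fin.rev_rev])

lemma segreG_apply {e : ℕ} (k l : Fin e) :
    segreG e k l = if l = k.rev then 1 else 0 := by
  have hk := k.isLt; have hl := l.isLt
  have : ((k:ℕ) + (l:ℕ) + 1 = e) ↔ l = k.rev := by
    rw [Fin.ext_iff, Fin.val_rev]; omega
  simp [segreG, this]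

lemma segreG_mul_self (e : ℕ) : segreG e * segreG e = 1 := by
  ext k l
  simp only [Matrix.mul_apply, segreG_apply]
  simp only [fun x => rev_comm l x]
  simp [ite_mul, Finset.sum_ite_eq', Fin.rev_rev, Matrix.one_apply, rev_comm, eq_comm]

lemma segreN_apply {e : ℕ} (lam : ℂ) (k l : Fin e) :
    (segreF e lam - lam • segreG e) k l = if (k:ℕ) + (l:ℕ) + 2 = e then 1 else 0 := by
  have hk := k.isLt; have hl := l.isLt
  simp only [Matrix.sub_apply, Matrix.smul_apply, segreF, segreG, Matrix.of_apply, smul_eq_mul]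
  split_ifs with h1 h2 h3 <;> first | (exfalso; omega) | ring

lemma GMG_apply {e : ℕ} (M : Matrix (Fin e) (Fin e) ℂ) (k l : Fin e) :
    (segreG e * M * segreG e) k l = M k.rev l.rev := by
  simp only [Matrix.mul_apply, segreG_apply]
  have h1 : ∀ p : Fin e, (∑ q : Fin e, (if q = k.rev then (1:ℂ) else 0) * M q p) = M k.rev p := by
    intro p; simp [ite_mul, Finset.sum_ite_eq']
  calc (∑ p : Fin e, (∑ q : Fin e, (if q = k.rev then (1:ℂ) else 0) * M q p) *
        (if l = p.rev then 1 else 0))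
      = ∑ p : Fin e, M k.rev p * (if p = l.rev then 1 else 0) := by
        refine Finset.sum_congr rfl fun p _ => ?_
        rw [h1 p]; simp only [rev_comm l]
    _ = M k.rev l.rev := by simp [mul_ite, Finset.sum_ite_eq']

lemma segreU_apply {e : ℕ} (lam : ℂ) (k l : Fin e) :
    ((segreF e lam - lam • segreG e) * segreG e) k l = if (k:ℕ) + 1 = (l:ℕ) then 1 else 0 := by
  have hk := k.isLt; have hl := l.isLt
  simp only [Matrix.mul_apply, segreN_apply, segreG_apply]
  have : ∀ j : Fin e, ((if (k:ℕ) + (j:ℕ) + 2 = e then (1:ℂ) else 0) * (if l = j.rev then 1 else 0))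
      = if j = l.rev then (if (k:ℕ) + (j:ℕ) + 2 = e then (1:ℂ) else 0) else 0 := by
    intro j
    simp only [rev_comm l]
    by_cases h : j = l.rev <;> simp [h]
  rw [Finset.sum_congr rfl fun j _ => this j, Finset.sum_ite_eq']
  simp only [Finset.mem_univ, if_true, Fin.val_rev]
  congr 1
  simp only [eq_iff_iff]
  omega


/-- Entries of a matrix, extended by zero to all of `ℕ × ℕ`. -/
noncomputable def ext2 {e : ℕ} (M : Matrix (Fin e) (Fin e) ℂ) (k l : ℕ) : ℂ :=
  if hk : k < e then if hl : l < e then M ⟨k, hk⟩ ⟨l, hl⟩ else 0 else 0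

lemma ext2_fin {e : ℕ} (M : Matrix (Fin e) (Fin e) ℂ) (p q : Fin e) :
    ext2 M (p : ℕ) (q : ℕ) = M p q := by
  rw [ext2, dif_pos p.isLt, dif_pos q.isLt]

lemma sum_ite_val {e : ℕ} (f : Fin e → ℂ) (m : ℕ) :
    (∑ j : Fin e, if (j:ℕ) = m then f j else 0) = if h : m < e then f ⟨m, h⟩ else 0 := by
  by_cases h : m < e
  · rw [dif_pos h, Finset.sum_eq_single ⟨m, h⟩]
    · simp
    · intro j _ hj; rw [if_neg]; simpa [Fin.ext_iff] using hj
    · simp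
  · rw [dif_neg h, Finset.sum_eq_zero]
    intro j _; rw [if_neg]; intro hj; exact h (hj ▸ j.isLt)

lemma toeplitz_of_comm {e : ℕ} (B : Matrix (Fin e) (Fin e) ℂ)
    (h : B * Matrix.of (fun k l : Fin e => if (k:ℕ)+1 = (l:ℕ) then (1:ℂ) else 0)
       = Matrix.of (fun k l : Fin e => if (k:ℕ)+1 = (l:ℕ) then (1:ℂ) else 0) * B) :
    ∀ k l : ℕ, k < e → l < e → ext2 B k l = if k ≤ l then ext2 B 0 (l - k) else 0 := by
  have hstep : ∀ (k l : ℕ) (hk : k < e) (hl : l < e),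
      (if 1 ≤ l then ext2 B k (l-1) else 0) = ext2 B (k+1) l := by
    intro k l hk hl
    have hc := congr_fun (congr_fun h ⟨k, hk⟩) ⟨l, hl⟩
    rw [Matrix.mul_apply, Matrix.mul_apply] at hc
    simp only [Matrix.of_apply] at hc
    have hLs : (∑ j : Fin e, B ⟨k, hk⟩ j * (if (j:ℕ)+1 = (⟨l, hl⟩ : Fin e) then (1:ℂ) else 0))
        = if 1 ≤ l then ext2 B k (l-1) else 0 := by
      by_cases hl1 : 1 ≤ l
      · have key : ∀ j : Fin e, B ⟨k, hk⟩ j * (if (j:ℕ)+1 = (⟨l, hl⟩ : Fin e) then (1:ℂ) else 0)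
            = if (j:ℕ) = l-1 then B ⟨k, hk⟩ j else 0 := by
          intro j
          by_cases hj : (j:ℕ) = l - 1
          · rw [if_pos hj, if_pos (by simp; omega), mul_one]
          · rw [if_neg (by simp; omega), if_neg hj, mul_zero]
        rw [Finset.sum_congr rfl fun j _ => key j, sum_ite_val, if_pos hl1,
          dif_pos (by omega : l - 1 < e)]
        rw [ext2, dif_pos hk, dif_pos (by omega : l - 1 < e)]
      · rw [if_neg hl1]
        refine Finset.sum_eq_zero fun j _ => ?_
        rw [if_neg (by simp; omega), mul_zero]
    have hRs : (∑ j : Fin e, (if ((⟨k, hk⟩ : Fin e) : ℕ)+1 = (j:ℕ) then (1:ℂ) else 0) * B j ⟨l, hl⟩)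
        = ext2 B (k+1) l := by
      have key : ∀ j : Fin e, (if ((⟨k, hk⟩ : Fin e) : ℕ)+1 = (j:ℕ) then (1:ℂ) else 0) * B j ⟨l, hl⟩
          = if (j:ℕ) = k+1 then B j ⟨l, hl⟩ else 0 := by
        intro j
        by_cases hj : (j:ℕ) = k + 1
        · rw [if_pos (by simp; omega), if_pos hj, one_mul]
        · rw [if_neg (by simp; omega), if_neg hj, zero_mul]
      rw [Finset.sum_congr rfl fun j _ => key j, sum_ite_val, ext2]
      by_cases hk1 : k + 1 < e
      · rw [dif_pos hk1, dif_pos hk1, dif_pos hl]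
      · rw [dif_neg hk1, dif_neg hk1]
    rw [← hLs, ← hRs] at *
    exact hc
  intro k
  induction k with
  | zero =>
    intro l _ hl
    simp
  | succ k ih =>
    intro l hk1 hl
    rw [← hstep k l (by omega) hl]
    by_cases hl1 : 1 ≤ l
    · rw [if_pos hl1, ih (l-1) (by omega) (by omega)]
      have e2 : l-1-k = l-(k+1) := by omega
      rw [e2]
      exact if_congr (by omega) rfl rfl
    · rw [if_neg hl1, if_neg (by omega)]

/-- The stabilizer of a single `0`-cone block of the Segre normal form is `{± id}`:
if `Aᵀ G_e A = G_e` and `Aᵀ F_e A = F_e` then `A = I_e` or `A = -I_e`. -/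
theorem stabilizer_of_zero_cone_block (e : ℕ) (he : 1 ≤ e) (lam : ℂ)
    (A : Matrix (Fin e) (Fin e) ℂ)
    (hG : Aᵀ * segreG e * A = segreG e) (hF : Aᵀ * segreF e lam * A = segreF e lam) :
    A = 1 ∨ A = -1 := by
  have hGG := segreG_mul_self e
  have hN : Aᵀ * (segreF e lam - lam • segreG e) * A = segreF e lam - lam • segreG e := by
    rw [Matrix.mul_sub, Matrix.sub_mul, Matrix.mul_smul, Matrix.smul_mul, hF, hG]
  have hL : segreG e * Aᵀ * segreG e * A = 1 := by
    calc segreG e * Aᵀ * segreG e * A = segreG e * (Aᵀ * segreG e * A) := by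
          simp only [Matrix.mul_assoc]
      _ = segreG e * segreG e := by rw [hG]
      _ = 1 := hGG
  have hRt : A * (segreG e * Aᵀ * segreG e) = 1 := mul_eq_one_comm.mp hL
  have hComm : Aᵀ * Matrix.of (fun k l : Fin e => if (k:ℕ)+1 = (l:ℕ) then (1:ℂ) else 0)
      = Matrix.of (fun k l : Fin e => if (k:ℕ)+1 = (l:ℕ) then (1:ℂ) else 0) * Aᵀ := by
    have hUeq : (segreF e lam - lam • segreG e) * segreG e
        = Matrix.of (fun k l : Fin e => if (k:ℕ)+1 = (l:ℕ) then (1:ℂ) else 0) := by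
      ext k l; rw [segreU_apply]; rfl
    have h1 : Aᵀ * (segreF e lam - lam • segreG e)
        = (segreF e lam - lam • segreG e) * (segreG e * Aᵀ * segreG e) := by
      calc Aᵀ * (segreF e lam - lam • segreG e)
          = Aᵀ * (segreF e lam - lam • segreG e) * (A * (segreG e * Aᵀ * segreG e)) := by
            rw [hRt, Matrix.mul_one]
        _ = (Aᵀ * (segreF e lam - lam • segreG e) * A) * (segreG e * Aᵀ * segreG e) := by
            simp only [Matrix.mul_assoc]
        _ = (segreF e lam - lam • segreG e) * (segreG e * Aᵀ * segreG e) := by rw [hN]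
    calc Aᵀ * Matrix.of (fun k l : Fin e => if (k:ℕ)+1 = (l:ℕ) then (1:ℂ) else 0)
        = (Aᵀ * (segreF e lam - lam • segreG e)) * segreG e := by
          rw [← hUeq, Matrix.mul_assoc]
      _ = ((segreF e lam - lam • segreG e) * (segreG e * Aᵀ * segreG e)) * segreG e := by
          rw [h1]
      _ = ((segreF e lam - lam • segreG e) * segreG e) * Aᵀ * (segreG e * segreG e) := by
          simp only [Matrix.mul_assoc]
      _ = Matrix.of (fun k l : Fin e => if (k:ℕ)+1 = (l:ℕ) then (1:ℂ) else 0) * Aᵀ := by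
          rw [hGG, Matrix.mul_one, hUeq]
  have htp := toeplitz_of_comm Aᵀ hComm
  have h0e : 0 < e := he
  -- orthogonality relations
  have horth : ∀ n : ℕ, n < e →
      (∑ j ∈ Finset.range (n+1), ext2 Aᵀ 0 (n-j) * ext2 Aᵀ 0 j) = if n = 0 then 1 else 0 := by
    intro n hn
    have hc : (segreG e * Aᵀ * segreG e * A) ⟨n, hn⟩ ⟨0, h0e⟩
        = (1 : Matrix (Fin e) (Fin e) ℂ) ⟨n, hn⟩ ⟨0, h0e⟩ := by rw [hL]
    rw [Matrix.mul_apply] at hc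
    have hterm : ∀ j : Fin e, (segreG e * Aᵀ * segreG e) ⟨n, hn⟩ j * A j ⟨0, h0e⟩
        = (fun m => (if m ≤ n then ext2 Aᵀ 0 (n - m) else 0) * ext2 Aᵀ 0 m) (j : ℕ) := by
      intro j
      rw [GMG_apply]
      simp only []
      congr 1
      · have h1 : Aᵀ (Fin.rev ⟨n, hn⟩) j.rev = ext2 Aᵀ (e - (n+1)) (e - ((j:ℕ)+1)) := by
          rw [ext2, dif_pos (by omega : e - (n+1) < e), dif_pos (by omega : e - ((j:ℕ)+1) < e)]
          congr 1 <;> (rw [Fin.ext_iff]; simp [Fin.val_rev])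
        rw [h1, htp _ _ (by omega) (by omega)]
        by_cases hj : (j:ℕ) ≤ n
        · rw [if_pos (by omega), if_pos hj]
          congr 1
          omega
        · rw [if_neg (by omega), if_neg hj]
      · rw [ext2, dif_pos h0e, dif_pos j.isLt]
        rfl
    rw [Finset.sum_congr rfl fun j _ => hterm j] at hc
    rw [Fin.sum_univ_eq_sum_range
      (fun m => (if m ≤ n then ext2 Aᵀ 0 (n - m) else 0) * ext2 Aᵀ 0 m) e] at hc
    have hone : (1 : Matrix (Fin e) (Fin e) ℂ) ⟨n, hn⟩ ⟨0, h0e⟩ = if n = 0 then 1 else 0 := by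
      rw [Matrix.one_apply]
      exact if_congr (by rw [Fin.ext_iff]) rfl rfl
    calc (∑ j ∈ Finset.range (n+1), ext2 Aᵀ 0 (n-j) * ext2 Aᵀ 0 j)
        = ∑ m ∈ Finset.range (n+1),
            (if m ≤ n then ext2 Aᵀ 0 (n - m) else 0) * ext2 Aᵀ 0 m := by
          refine Finset.sum_congr rfl fun m hm => ?_
          rw [if_pos (by have := Finset.mem_range.mp hm; omega)]
      _ = ∑ m ∈ Finset.range e,
            (if m ≤ n then ext2 Aᵀ 0 (n - m) else 0) * ext2 Aᵀ 0 m := by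
          refine Finset.sum_subset (Finset.range_subset_range.mpr (by omega)) fun x _ hx => ?_
          have hx' : ¬ x < n + 1 := fun h => hx (Finset.mem_range.mpr h)
          rw [if_neg (by omega), zero_mul]
      _ = (1 : Matrix (Fin e) (Fin e) ℂ) ⟨n, hn⟩ ⟨0, h0e⟩ := hc
      _ = if n = 0 then 1 else 0 := hone
  have hb0 : ext2 Aᵀ 0 0 * ext2 Aᵀ 0 0 = 1 := by
    have h := horth 0 h0e
    simpa using h
  have hb0ne : ext2 Aᵀ 0 0 ≠ 0 := fun hz => by
    rw [hz, zero_mul] at hb0; exact one_ne_zero hb0.symm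
  have hbz : ∀ n, n < e → 1 ≤ n → ext2 Aᵀ 0 n = 0 := by
    intro n
    induction n using Nat.strong_induction_on with
    | _ n ih =>
      intro hn h1
      have hsum := horth n hn
      rw [if_neg (by omega)] at hsum
      rw [Finset.sum_eq_add 0 n (by omega)
        (fun c hc hcc => by
          have hcn := Finset.mem_range.mp hc
          rw [ih c (by omega) (by omega) (by omega), mul_zero])
        (fun h => absurd (Finset.mem_range.mpr (by omega)) h)
        (fun h => absurd (Finset.mem_range.mpr (by omega)) h)] at hsum
      simp only [Nat.sub_zero, Nat.sub_self] at hsum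
      have h3 : ext2 Aᵀ 0 0 * ext2 Aᵀ 0 n = 0 := by linear_combination hsum / 2
      exact (mul_eq_zero.mp h3).resolve_left hb0ne
  have hA : ∀ k l : Fin e, A k l = if k = l then ext2 Aᵀ 0 0 else 0 := by
    intro k l
    have h1 : A k l = ext2 Aᵀ (l:ℕ) (k:ℕ) := by rw [ext2_fin]; rfl
    rw [h1, htp _ _ l.isLt k.isLt]
    rcases lt_trichotomy ((k:ℕ)) ((l:ℕ)) with hlt | heq | hgt
    · rw [if_neg (by omega), if_neg (by rw [Fin.ext_iff]; omega)]
    · rw [if_pos (by omega), if_pos (Fin.ext heq.symm).symm]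
      congr 1
      omega
    · rw [if_pos (by omega), hbz ((k:ℕ)-(l:ℕ)) (by omega) (by omega),
        if_neg (by rw [Fin.ext_iff]; omega)]
  rcases mul_self_eq_one_iff.mp hb0 with h1 | h1
  · left
    ext k l
    rw [hA, Matrix.one_apply]
    split_ifs <;> simp [h1]
  · right
    ext k l
    rw [hA, Matrix.neg_apply, Matrix.one_apply]
    split_ifs <;> simp [h1]
end

section
/- Let V = ℂ⁴, W = ⋀²V, fix a linear isomorphism φ : ⋀⁴V → ℂ, and let B_G be the symmetric bilinear form on W defined by B_G(x, y) = φ(x ∧ y). Let B_F be any symmetric bilinear form on W. Let v, w ∈ V be linearly independent and x = v ∧ w, and suppose B_F(x, x) = 0. Then: (a) if the linear forms B_F(x, ·) and B_G(x, ·) on W are linearly independent (x is a smooth point of the quadratic complex X = {B_G = 0} ∩ {B_F = 0}), then any p, q ∈ span{v, w} satisfying B_F(x, p ∧ u) = 0 and B_F(x, q ∧ u) = 0 for all u ∈ V are linearly dependent; that is, the line l_x is singular at exactly one point of ℙ³. (b) If B_F(x, ·) = c·B_G(x, ·) for some c ∈ ℂ (x is a singular point of X), then B_F(x, p ∧ u)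 = 0 for every p ∈ span{v, w} and every u ∈ V; that is, l_x is singular at every point of l_x. -/
open ExteriorAlgebra

/-- `ℂ⁴`, the space whose lines are the points of `ℙ³`. -/
abbrev V4 : Type := Fin 4 → ℂ

lemma iota_mul_iota_mem (p u : V4) :
    ι ℂ p * ι ℂ u ∈ ⋀[ℂ]^2 V4 := by
  rw [show (⋀[ℂ]^2 V4) = LinearMap.range (ι ℂ : V4 →ₗ[ℂ] ExteriorAlgebra ℂ V4) *
      LinearMap.range (ι ℂ) from sq _]
  exact Submodule.mul_mem_mul (LinearMap.mem_range_self _ p) (LinearMap.mem_range_self _ u)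

lemma mul_mem_exteriorPower_four (x y : ExteriorAlgebra ℂ V4)
    (hx : x ∈ ⋀[ℂ]^2 V4) (hy : y ∈ ⋀[ℂ]^2 V4) : x * y ∈ ⋀[ℂ]^4 V4 := by
  rw [show (⋀[ℂ]^4 V4) = (⋀[ℂ]^2 V4) * (⋀[ℂ]^2 V4) by
    rw [← pow_add]]
  exact Submodule.mul_mem_mul hx hy

/-- The decomposable bivector `p ∧ u ∈ ⋀²V`. -/
noncomputable def wedgeVec (p u : V4) : ⋀[ℂ]^2 V4 :=
  ⟨ι ℂ p * ι ℂ u, iota_mul_iota_mem p u⟩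

/-- The wedge product `⋀²V × ⋀²V → ⋀⁴V` as a bilinear map. -/
noncomputable def wedgeBilin : ⋀[ℂ]^2 V4 →ₗ[ℂ] ⋀[ℂ]^2 V4 →ₗ[ℂ] ⋀[ℂ]^4 V4 :=
  LinearMap.mk₂ ℂ (fun x y => ⟨x.1 * y.1, mul_mem_exteriorPower_four x.1 y.1 x.2 y.2⟩)
    (fun x x' y => Subtype.ext (by simp [add_mul]))
    (fun c x y => Subtype.ext (by simp [Submodule.coe_smul, smul_mul_assoc]))
    (fun x y y' => Subtype.ext (by simp [mul_add]))
    (fun c x y => Subtype.ext (by simp [Submodule.coe_smul, mul_smul_comm]))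

lemma iota_swap (a b : V4) : ι ℂ b * ι ℂ a = -(ι ℂ a * ι ℂ b) :=
  eq_neg_of_add_eq_zero_left (by rw [add_comm]; exact ι_add_mul_swap a b)

lemma wedgeVec_anticomm (a b : V4) : wedgeVec a b = - wedgeVec b a :=
  Subtype.ext (by simp [wedgeVec, iota_swap b a])

lemma triple_zero {v w p : V4} (hp : p ∈ Submodule.span ℂ {v, w}) :
    ι ℂ v * ι ℂ w * ι ℂ p = 0 := by
  obtain ⟨s, t, rfl⟩ := Submodule.mem_span_pair.mp hp
  have h1 : ι ℂ v * ι ℂ w * ι ℂ v = 0 := by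
    rw [mul_assoc, iota_swap v w, mul_neg, ← mul_assoc, ι_sq_zero, zero_mul, neg_zero]
  have h2 : ι ℂ v * ι ℂ w * ι ℂ w = 0 := by rw [mul_assoc, ι_sq_zero, mul_zero]
  rw [map_add, map_smul, map_smul, mul_add, mul_smul_comm, mul_smul_comm, h1, h2,
    smul_zero, smul_zero, add_zero]

lemma wedgeBilin_wedgeVec_val (a b p u : V4) :
    (wedgeBilin (wedgeVec a b) (wedgeVec p u) : ExteriorAlgebra ℂ V4)
      = ι ℂ a * ι ℂ b * (ι ℂ p * ι ℂ u) := rfl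

lemma wedgeBilin_zero_of_triple {a b p : V4} (h : ι ℂ a * ι ℂ b * ι ℂ p = 0) (u : V4) :
    wedgeBilin (wedgeVec a b) (wedgeVec p u) = 0 := by
  apply Subtype.ext
  rw [wedgeBilin_wedgeVec_val, ← mul_assoc, h, zero_mul]
  exact (ZeroMemClass.coe_zero _).symm

noncomputable def wedgeVecBilin : V4 →ₗ[ℂ] V4 →ₗ[ℂ] ⋀[ℂ]^2 V4 :=
  LinearMap.mk₂ ℂ wedgeVec
    (fun a a' b => Subtype.ext (by simp [wedgeVec, add_mul]))
    (fun c a b => Subtype.ext (by simp [wedgeVec, smul_mul_assoc]))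
    (fun a b b' => Subtype.ext (by simp [wedgeVec, mul_add]))
    (fun c a b => Subtype.ext (by simp [wedgeVec, mul_smul_comm]))

@[simp] lemma wedgeVecBilin_apply (a b : V4) : wedgeVecBilin a b = wedgeVec a b := rfl

lemma ext_of_wedge {h1 h2 : (⋀[ℂ]^2 V4) →ₗ[ℂ] ℂ}
    (h : ∀ a b : V4, h1 (wedgeVec a b) = h2 (wedgeVec a b)) : h1 = h2 := by
  have key : ∀ z ∈ (LinearMap.range (ι ℂ : V4 →ₗ[ℂ] ExteriorAlgebra ℂ V4) *
      LinearMap.range (ι ℂ)), ∀ hz : z ∈ ⋀[ℂ]^2 V4, h1 ⟨z, hz⟩ = h2 ⟨z, hz⟩ := by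
    intro z hz0
    induction hz0 using Submodule.mul_induction_on' with
    | mem_mul_mem m hm n hn =>
      obtain ⟨a, rfl⟩ := hm
      obtain ⟨b, rfl⟩ := hn
      intro hz
      exact h a b
    | add x hx y hy ihx ihy =>
      intro hz
      have hx' : x ∈ ⋀[ℂ]^2 V4 := by
        rw [show (⋀[ℂ]^2 V4) = LinearMap.range (ι ℂ : V4 →ₗ[ℂ] ExteriorAlgebra ℂ V4) *
          LinearMap.range (ι ℂ) from sq _]
        exact hx
      have hy' : y ∈ ⋀[ℂ]^2 V4 := by
        rw [show (⋀[ℂ]^2 V4) = LinearMap.range (ι ℂ : V4 →ₗ[ℂ] ExteriorAlgebra ℂ V4) *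
          LinearMap.range (ι ℂ) from sq _]
        exact hy
      have hsum : (⟨x + y, hz⟩ : ⋀[ℂ]^2 V4) = ⟨x, hx'⟩ + ⟨y, hy'⟩ := rfl
      rw [hsum, map_add, map_add, ihx hx', ihy hy']
  refine LinearMap.ext fun y => ?_
  obtain ⟨z, hz⟩ := y
  refine key z ?_ hz
  rw [← show (⋀[ℂ]^2 V4) = LinearMap.range (ι ℂ : V4 →ₗ[ℂ] ExteriorAlgebra ℂ V4) *
      LinearMap.range (ι ℂ) from sq _]
  exact hz

set_option maxHeartbeats 1000000 in
/-- Singular lines of a quadratic complex.  Let `B_G(x, y) = φ(x ∧ y)` be the Plücker form on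
`W = ⋀²ℂ⁴` and `B_F` a symmetric bilinear form on `W`, and let `x = v ∧ w` be a point of the
quadratic complex `X = {B_G = 0} ∩ {B_F = 0}` (so `B_F(x,x) = 0`).
(a) If `x` is a smooth point of `X` (the functionals `B_F(x,·)` and `B_G(x,·)` are linearly
independent), then the line `l_x` is singular at exactly one point of `ℙ³`: any two points
`p, q` of `l_x` at which `l_x` is singular (i.e. `B_F(x, ·)` vanishes on the α-planes
`p ∧ V`, `q ∧ V`) are linearly dependent.
(b) If `x` is a singular point of `X` (`B_F(x,·)` is proportional to `B_G(x,·)`), then `l_x`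
is singular at every point `p ∈ l_x`. -/
theorem singular_line_of_quadratic_complex
    (φ : (⋀[ℂ]^4 V4) →ₗ[ℂ] ℂ) (hφ : Function.Bijective φ)
    (BF : (⋀[ℂ]^2 V4) →ₗ[ℂ] (⋀[ℂ]^2 V4) →ₗ[ℂ] ℂ) (hBF : ∀ x y, BF x y = BF y x)
    (v w : V4) (hvw : LinearIndependent ℂ ![v, w])
    (hx : BF (wedgeVec v w) (wedgeVec v w) = 0) :
    (LinearIndependent ℂ ![BF (wedgeVec v w), φ ∘ₗ wedgeBilin (wedgeVec v w)] →
      ∀ p q : V4, p ∈ Submodule.span ℂ {v, w} → q ∈ Submodule.span ℂ {v, w} →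
        (∀ u : V4, BF (wedgeVec v w) (wedgeVec p u) = 0) →
        (∀ u : V4, BF (wedgeVec v w) (wedgeVec q u) = 0) →
        ¬ LinearIndependent ℂ ![p, q]) ∧
    ((∃ c : ℂ, ∀ y : ⋀[ℂ]^2 V4,
        BF (wedgeVec v w) y = c * φ (wedgeBilin (wedgeVec v w) y)) →
      ∀ p ∈ Submodule.span ℂ {v, w}, ∀ u : V4,
        BF (wedgeVec v w) (wedgeVec p u) = 0) := by
  constructor
  · intro hind p q hp hq hup huq hpq
    set g : (⋀[ℂ]^2 V4) →ₗ[ℂ] ℂ := φ ∘ₗ wedgeBilin (wedgeVec v w) with hgdef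
    set Fb : V4 →ₗ[ℂ] V4 →ₗ[ℂ] ℂ := wedgeVecBilin.compr₂ (BF (wedgeVec v w)) with hFbdef
    set Gb : V4 →ₗ[ℂ] V4 →ₗ[ℂ] ℂ := wedgeVecBilin.compr₂ g with hGbdef
    have hgapp : ∀ y, g y = φ (wedgeBilin (wedgeVec v w) y) := by
      intro y; rw [hgdef, LinearMap.comp_apply]
    have hFb : ∀ a b : V4, Fb a b = BF (wedgeVec v w) (wedgeVec a b) := by
      intro a b; rw [hFbdef, LinearMap.compr₂_apply, wedgeVecBilin_apply]
    have hGb : ∀ a b : V4, Gb a b = g (wedgeVec a b) := by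
      intro a b; rw [hGbdef, LinearMap.compr₂_apply, wedgeVecBilin_apply]
    have hFskew : ∀ a b : V4, Fb a b = - Fb b a := by
      intro a b
      rw [hFb, hFb, wedgeVec_anticomm a b, map_neg]
    have hGskew : ∀ a b : V4, Gb a b = - Gb b a := by
      intro a b
      rw [hGb, hGb, wedgeVec_anticomm a b, map_neg]
    have hGzero : ∀ y ∈ Submodule.span ℂ {v, w}, ∀ u : V4, Gb y u = 0 := by
      intro y hy u
      rw [hGb, hgapp, wedgeBilin_zero_of_triple (triple_zero hy) u, map_zero]
    set S : Submodule ℂ V4 := Submodule.span ℂ {p, q} with hSdef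
    have hSle : S ≤ Submodule.span ℂ {v, w} := by
      rw [hSdef, Submodule.span_le]
      intro y hy
      simp only [Set.mem_insert_iff, Set.mem_singleton_iff] at hy
      rcases hy with rfl | rfl
      · exact hp
      · exact hq
    have hFp : ∀ u : V4, Fb p u = 0 := by intro u; rw [hFb]; exact hup u
    have hFq : ∀ u : V4, Fb q u = 0 := by intro u; rw [hFb]; exact huq u
    have hFS : ∀ y ∈ S, ∀ u : V4, Fb y u = 0 := by
      intro y hy u
      obtain ⟨s, t, rfl⟩ := Submodule.mem_span_pair.mp hy
      rw [map_add, LinearMap.add_apply, map_smul, map_smul, LinearMap.smul_apply,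
        LinearMap.smul_apply, hFp, hFq, smul_zero, smul_zero, add_zero]
    have hGS : ∀ y ∈ S, ∀ u : V4, Gb y u = 0 := fun y hy u => hGzero y (hSle hy) u
    have hkerF : S ≤ LinearMap.ker Fb := by
      intro y hy
      rw [LinearMap.mem_ker]
      exact LinearMap.ext fun u => hFS y hy u
    have hkerG : S ≤ LinearMap.ker Gb := by
      intro y hy
      rw [LinearMap.mem_ker]
      exact LinearMap.ext fun u => hGS y hy u
    set F1 := S.liftQ Fb hkerF with hF1def
    set G1 := S.liftQ Gb hkerG with hG1def
    have hF1 : ∀ a : V4, F1 (Submodule.Quotient.mk a) = Fb a := by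
      intro a; rw [hF1def, Submodule.liftQ_apply]
    have hG1 : ∀ a : V4, G1 (Submodule.Quotient.mk a) = Gb a := by
      intro a; rw [hG1def, Submodule.liftQ_apply]
    have hkerF2 : S ≤ LinearMap.ker F1.flip := by
      intro y hy
      rw [LinearMap.mem_ker]
      apply LinearMap.ext
      intro α
      obtain ⟨z, rfl⟩ := Submodule.Quotient.mk_surjective S α
      rw [LinearMap.flip_apply, hF1, LinearMap.zero_apply, hFskew, hFS y hy z, neg_zero]
    have hkerG2 : S ≤ LinearMap.ker G1.flip := by
      intro y hy
      rw [LinearMap.mem_ker]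
      apply LinearMap.ext
      intro α
      obtain ⟨z, rfl⟩ := Submodule.Quotient.mk_surjective S α
      rw [LinearMap.flip_apply, hG1, LinearMap.zero_apply, hGskew, hGS y hy z, neg_zero]
    set F2 := (S.liftQ F1.flip hkerF2).flip with hF2def
    set G2 := (S.liftQ G1.flip hkerG2).flip with hG2def
    have hF2 : ∀ a b : V4,
        F2 (Submodule.Quotient.mk a) (Submodule.Quotient.mk b) = Fb a b := by
      intro a b
      rw [hF2def, LinearMap.flip_apply, Submodule.liftQ_apply, LinearMap.flip_apply, hF1]
    have hG2 : ∀ a b : V4,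
        G2 (Submodule.Quotient.mk a) (Submodule.Quotient.mk b) = Gb a b := by
      intro a b
      rw [hG2def, LinearMap.flip_apply, Submodule.liftQ_apply, LinearMap.flip_apply, hG1]
    have hF2skew : ∀ α β, F2 α β = - F2 β α := by
      intro α β
      obtain ⟨a, rfl⟩ := Submodule.Quotient.mk_surjective S α
      obtain ⟨b, rfl⟩ := Submodule.Quotient.mk_surjective S β
      rw [hF2, hF2, hFskew]
    have hG2skew : ∀ α β, G2 α β = - G2 β α := by
      intro α β
      obtain ⟨a, rfl⟩ := Submodule.Quotient.mk_surjective S α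
      obtain ⟨b, rfl⟩ := Submodule.Quotient.mk_surjective S β
      rw [hG2, hG2, hGskew]
    have hF2alt : ∀ α, F2 α α = 0 := fun α => add_self_eq_zero.mp (by
      nth_rewrite 2 [hF2skew α α]
      exact add_neg_cancel _)
    have hG2alt : ∀ α, G2 α α = 0 := fun α => add_self_eq_zero.mp (by
      nth_rewrite 2 [hG2skew α α]
      exact add_neg_cancel _)
    have hrange : Set.range ![p, q] = {p, q} := by
      rw [show (![p, q] : Fin 2 → V4) = ![p, q] from rfl]
      simp only [Matrix.range_cons, Matrix.range_empty, Set.union_empty, Set.union_singleton]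
      exact Set.pair_comm q p
    have hS2 : Module.finrank ℂ S = 2 := by
      rw [hSdef, ← hrange, finrank_span_eq_card hpq, Fintype.card_fin]
    have h4 : Module.finrank ℂ V4 = 4 := Module.finrank_fin_fun ℂ
    have hsum := Submodule.finrank_quotient_add_finrank S
    have hQ2 : Module.finrank ℂ (V4 ⧸ S) = 2 := by omega
    obtain ⟨c⟩ : Nonempty (Module.Basis (Fin 2) ℂ (V4 ⧸ S)) :=
      ⟨Module.finBasisOfFinrankEq ℂ (V4 ⧸ S) hQ2⟩
    by_cases hzero : G2 (c 0) (c 1) = 0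
    · have hG2zero : G2 = 0 := by
        apply LinearMap.ext_basis c c
        intro i j
        fin_cases i <;> fin_cases j
        · simp [hG2alt]
        · simpa using hzero
        · rw [LinearMap.zero_apply, hG2skew]
          simpa using congrArg Neg.neg hzero
        · simp [hG2alt]
      have hGb0 : ∀ a b : V4, Gb a b = 0 := by
        intro a b
        rw [← hG2, hG2zero, LinearMap.zero_apply, LinearMap.zero_apply]
      have hg0 : g = 0 := by
        apply ext_of_wedge
        intro a b
        rw [← hGb, hGb0, LinearMap.zero_apply]
      have hne := hind.ne_zero 1
      simp only [Matrix.cons_val_one, Matrix.head_cons] at hne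
      exact hne hg0
    · obtain ⟨c', hc'def⟩ : ∃ z : ℂ, z = F2 (c 0) (c 1) / G2 (c 0) (c 1) := ⟨_, rfl⟩
      have hFG : F2 = c' • G2 := by
        apply LinearMap.ext_basis c c
        intro i j
        fin_cases i <;> fin_cases j
        · simp [hF2alt, hG2alt]
        · rw [LinearMap.smul_apply, LinearMap.smul_apply, smul_eq_mul]
          simp only [Fin.zero_eta, Fin.mk_one, Fin.isValue]
          rw [hc'def, div_mul_cancel₀ _ hzero]
        · rw [LinearMap.smul_apply, LinearMap.smul_apply, smul_eq_mul]
          simp only [Fin.zero_eta, Fin.mk_one, Fin.isValue]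
          rw [hF2skew (c 1) (c 0), hG2skew (c 1) (c 0), hc'def, mul_neg,
            div_mul_cancel₀ _ hzero]
        · simp [hF2alt, hG2alt]
      have hfun : BF (wedgeVec v w) = c' • g := by
        apply ext_of_wedge
        intro a b
        rw [← hFb, LinearMap.smul_apply, smul_eq_mul, ← hGb, ← hF2, ← hG2, hFG,
          LinearMap.smul_apply, LinearMap.smul_apply, smul_eq_mul]
      have h2 := (linearIndependent_fin2.mp hind).2 c'
      simp only [Matrix.cons_val_one, Matrix.head_cons, Matrix.cons_val_zero] at h2
      exact h2 hfun.symm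
  · rintro ⟨c, hc⟩ p hp u
    rw [hc, wedgeBilin_zero_of_triple (triple_zero hp) u, map_zero, mul_zero]
end

section
/- Let G be an invertible symmetric 6×6 complex matrix and F a symmetric 6×6 complex matrix. Let x ∈ ℂ⁶ satisfy xᵀGx = 0 and xᵀFx = 0, and suppose that Fx and Gx are linearly independent (x is a smooth point of the quadratic complex X = F ∩ G). Then the following are equivalent: (1) there exists y ∈ ℂ⁶ with y ∉ ℂ·x, yᵀGy = 0, and Gy = c·Fx for some c ≠ 0 (the tangent hyperplane of F at x equals the tangent hyperplane of G at a point y of G different from x); (2) xᵀ(F G⁻¹ F)x = 0. -/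
open Matrix

/-- Characterization of the smooth points of a quadratic complex `X = F ∩ G` lying on its
singular surface `Σ`: for a smooth point `x` of `X`, the tangent hyperplane of `F` at `x`
coincides with the tangent hyperplane of `G` at some point `y ∈ G`, `y ≠ x` (i.e. `Gy` is a
nonzero multiple of `Fx`) if and only if `xᵀ (F G⁻¹ F) x = 0`. -/
theorem singular_surface_pointwise
    (G F : Matrix (Fin 6) (Fin 6) ℂ) (hGs : G.IsSymm) (hGu : IsUnit G.det) (hFs : F.IsSymm)
    (x : Fin 6 → ℂ)
    (hxG : x ⬝ᵥ G.mulVec x = 0) (hxF : x ⬝ᵥ F.mulVec x = 0)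
    (hsmooth : LinearIndependent ℂ ![F.mulVec x, G.mulVec x]) :
    (∃ y : Fin 6 → ℂ, y ∉ Submodule.span ℂ {x} ∧ y ⬝ᵥ G.mulVec y = 0 ∧
      ∃ c : ℂ, c ≠ 0 ∧ G.mulVec y = c • F.mulVec x) ↔
    x ⬝ᵥ (F * G⁻¹ * F).mulVec x = 0 := by
  have hmul : G * G⁻¹ = 1 := mul_nonsing_inv G hGu
  have hmul' : G⁻¹ * G = 1 := nonsing_inv_mul G hGu
  have key : x ⬝ᵥ (F * G⁻¹ * F).mulVec x
      = (F.mulVec x) ⬝ᵥ G⁻¹.mulVec (F.mulVec x) := by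
    rw [← mulVec_mulVec, ← mulVec_mulVec, dotProduct_mulVec, ← mulVec_transpose, hFs.eq]
  rw [linearIndependent_fin2] at hsmooth
  constructor
  · rintro ⟨y, hy, hyG, c, hc, hGy⟩
    have hFx : F.mulVec x = c⁻¹ • G.mulVec y := by
      rw [hGy, smul_smul, inv_mul_cancel₀ hc, one_smul]
    have hinv : G⁻¹.mulVec (G.mulVec y) = y := by
      rw [mulVec_mulVec, hmul', one_mulVec]
    rw [key, hFx, mulVec_smul, hinv, smul_dotProduct, dotProduct_smul, dotProduct_comm,
      hyG, smul_zero, smul_zero]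
  · intro h
    refine ⟨G⁻¹.mulVec (F.mulVec x), ?_, ?_, 1, one_ne_zero, ?_⟩
    · rw [Submodule.mem_span_singleton]
      rintro ⟨a, ha⟩
      have h2 : G.mulVec (G⁻¹.mulVec (F.mulVec x)) = F.mulVec x := by
        rw [mulVec_mulVec, hmul, one_mulVec]
      have : a • G.mulVec x = F.mulVec x := by
        rw [← h2, ← ha, mulVec_smul]
      exact hsmooth.2 a (by simpa using this)
    · have hGG : G.mulVec (G⁻¹.mulVec (F.mulVec x)) = F.mulVec x := by
        rw [mulVec_mulVec, hmul, one_mulVec]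
      rw [hGG, dotProduct_comm, ← key, h]
    · rw [mulVec_mulVec, hmul, one_mulVec, one_smul]
end

section
/- Let F and G be invertible symmetric 6×6 complex matrices and set H = F G⁻¹ F. Then the following two subsets of ℂ⁶ ∖ {0} coincide: {x ≠ 0 : xᵀGx = 0, xᵀFx = 0, and there exists y ∈ ℂ⁶ ∖ {0} with yᵀGy = 0 and Gy = c·Fx for some c ≠ 0} and {x ≠ 0 : xᵀGx = 0, xᵀFx = 0, xᵀHx = 0}. That is, the affine cone over the singular surface Σ of the quadratic complex X = F ∩ G is the complete intersection F ∩ G ∩ H. -/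
open Matrix

lemma symm_dot {n : Type*} [Fintype n] (A : Matrix n n ℂ) (hA : A.IsSymm)
    (x y : n → ℂ) : x ⬝ᵥ A.mulVec y = A.mulVec x ⬝ᵥ y := by
  rw [Matrix.dotProduct_mulVec, ← Matrix.mulVec_transpose, hA.eq]

/-- The affine cone over the singular surface `Σ` of the quadratic complex `X = F ∩ G` is
the complete intersection `F ∩ G ∩ H` with `H = F G⁻¹ F`: a nonzero point `x` with
`xᵀGx = xᵀFx = 0` admits some `y ≠ 0` with `yᵀGy = 0` and `Gy` a nonzero multiple of `Fx`
(i.e. the tangent hyperplane of `F` at `x` is a tangent hyperplane of `G`) exactly when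
`xᵀHx = 0`. -/
theorem singular_surface_complete_intersection
    (F G : Matrix (Fin 6) (Fin 6) ℂ) (hFs : F.IsSymm) (hGs : G.IsSymm)
    (hFu : IsUnit F.det) (hGu : IsUnit G.det) :
    {x : Fin 6 → ℂ | x ≠ 0 ∧ x ⬝ᵥ G.mulVec x = 0 ∧ x ⬝ᵥ F.mulVec x = 0 ∧
      ∃ y : Fin 6 → ℂ, y ≠ 0 ∧ y ⬝ᵥ G.mulVec y = 0 ∧
        ∃ c : ℂ, c ≠ 0 ∧ G.mulVec y = c • F.mulVec x} =
    {x : Fin 6 → ℂ | x ≠ 0 ∧ x ⬝ᵥ G.mulVec x = 0 ∧ x ⬝ᵥ F.mulVec x = 0 ∧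
      x ⬝ᵥ (F * G⁻¹ * F).mulVec x = 0} := by
  have hexp : ∀ x : Fin 6 → ℂ, (F * G⁻¹ * F).mulVec x
      = F.mulVec (G⁻¹.mulVec (F.mulVec x)) := by
    intro x; rw [← Matrix.mulVec_mulVec, ← Matrix.mulVec_mulVec]
  ext x
  simp only [Set.mem_setOf_eq]
  refine and_congr_right fun hx => and_congr_right fun hG => and_congr_right fun hF => ?_
  constructor
  · rintro ⟨y, hy, hyG, c, hc, hGy⟩
    have hFx : F.mulVec x = c⁻¹ • G.mulVec y := by
      rw [hGy, smul_smul, inv_mul_cancel₀ hc, one_smul]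
    rw [hexp, hFx, Matrix.mulVec_smul, Matrix.mulVec_mulVec,
      Matrix.nonsing_inv_mul G hGu, Matrix.one_mulVec, Matrix.mulVec_smul,
      dotProduct_smul, symm_dot F hFs, hFx, smul_dotProduct,
      dotProduct_comm, ← hyG]
    simp [hyG]
  · intro hH
    refine ⟨G⁻¹.mulVec (F.mulVec x), ?_, ?_, 1, one_ne_zero, ?_⟩
    · intro h0
      apply hx
      have hFx0 : F.mulVec x = 0 := by
        have := congrArg G.mulVec h0
        rwa [Matrix.mulVec_mulVec, Matrix.mul_nonsing_inv G hGu,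
          Matrix.one_mulVec, Matrix.mulVec_zero] at this
      have := congrArg F⁻¹.mulVec hFx0
      rwa [Matrix.mulVec_mulVec, Matrix.nonsing_inv_mul F hFu,
        Matrix.one_mulVec, Matrix.mulVec_zero] at this
    · have hGinv : (G⁻¹).IsSymm := by
        rw [Matrix.IsSymm, Matrix.transpose_nonsing_inv, hGs.eq]
      rw [Matrix.mulVec_mulVec, Matrix.mulVec_mulVec, ← Matrix.mul_assoc,
        Matrix.mul_nonsing_inv G hGu, Matrix.one_mul, ← Matrix.mulVec_mulVec,
        ← symm_dot _ hGinv, ← symm_dot F hFs, ← hexp]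
      exact hH
    · rw [Matrix.mulVec_mulVec, Matrix.mulVec_mulVec,
        Matrix.mul_nonsing_inv G hGu, Matrix.one_mul, one_smul]
end

section
/- Let λ₁,…,λ₆ be pairwise distinct complex numbers and let ρ ∈ ℂ with ρ ≠ λᵢ for i = 1,…,6. Define Σ = {x ∈ ℂ⁶ : Σᵢ xᵢ² = 0, Σᵢ λᵢxᵢ² = 0, Σᵢ λᵢ²xᵢ² = 0} and Σ_ρ = {y ∈ ℂ⁶ : Σᵢ yᵢ² = 0, Σᵢ yᵢ²/(λᵢ−ρ) = 0, Σᵢ yᵢ²/(λᵢ−ρ)² = 0}. Then the invertible linear map T : ℂ⁶ → ℂ⁶ given by T(x)ᵢ = (λᵢ − ρ)xᵢ satisfies T(Σ) = Σ_ρ. Hence the singular surfaces in ℙ⁵ of the quadratic complex X = F ∩ G and of the cosingular complex X_ρ = F_ρ ∩ G are projectively equivalent. -/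
/-- The singular surfaces in `ℙ⁵` of a generic quadratic complex `X = F ∩ G` (in Klein
normal form, `G = Σ xᵢ²`, `F = Σ λᵢxᵢ²`) and of the cosingular complex `X_ρ = F_ρ ∩ G`
(`F_ρ = Σ xᵢ²/(λᵢ - ρ)`) are projectively equivalent: the invertible linear map
`T(x)ᵢ = (λᵢ - ρ)xᵢ` maps `Σ` onto `Σ_ρ`. -/
theorem cosingular_surfaces_equivalent (lam : Fin 6 → ℂ) (hlam : Function.Injective lam)
    (ρ : ℂ) (hρ : ∀ i, ρ ≠ lam i) :
    Function.Bijective (fun x : Fin 6 → ℂ => fun i => (lam i - ρ) * x i) ∧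
    (fun x : Fin 6 → ℂ => fun i => (lam i - ρ) * x i) ''
        {x : Fin 6 → ℂ | ∑ i, (x i) ^ 2 = 0 ∧ ∑ i, lam i * (x i) ^ 2 = 0 ∧
          ∑ i, (lam i) ^ 2 * (x i) ^ 2 = 0} =
      {y : Fin 6 → ℂ | ∑ i, (y i) ^ 2 = 0 ∧ ∑ i, (y i) ^ 2 / (lam i - ρ) = 0 ∧
          ∑ i, (y i) ^ 2 / (lam i - ρ) ^ 2 = 0} := by
  have hc : ∀ i, lam i - ρ ≠ 0 := fun i h => (hρ i) (by linear_combination -h)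
  constructor
  · constructor
    · intro x y h
      funext i
      have := congrFun h i
      simp only at this
      exact mul_left_cancel₀ (hc i) this
    · intro y
      refine ⟨fun i => y i / (lam i - ρ), ?_⟩
      funext i
      exact mul_div_cancel₀ (y i) (hc i)
  · ext y
    constructor
    · rintro ⟨x, ⟨h1, h2, h3⟩, rfl⟩
      refine ⟨?_, ?_, ?_⟩
      · have e : ∀ i ∈ Finset.univ, ((lam i - ρ) * x i) ^ 2 =
            (lam i) ^ 2 * x i ^ 2 + (-(2 * ρ)) * (lam i * x i ^ 2) + ρ ^ 2 * x i ^ 2 :=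
          fun i _ => by ring
        rw [Finset.sum_congr rfl e, Finset.sum_add_distrib, Finset.sum_add_distrib,
          ← Finset.mul_sum, ← Finset.mul_sum, h1, h2, h3]
        ring
      · have e : ∀ i ∈ Finset.univ, ((lam i - ρ) * x i) ^ 2 / (lam i - ρ) =
            lam i * x i ^ 2 + (-ρ) * x i ^ 2 := fun i _ => by
          field_simp [hc i, sub_ne_zero.mpr (Ne.symm (hρ i))]
          ring
        rw [Finset.sum_congr rfl e, Finset.sum_add_distrib, ← Finset.mul_sum, h1, h2]
        ring
      · have e : ∀ i ∈ Finset.univ, ((lam i - ρ) * x i) ^ 2 / (lam i - ρ) ^ 2 =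
            x i ^ 2 := fun i _ => by
          rw [mul_pow, mul_comm, mul_div_assoc, div_self (pow_ne_zero 2 (hc i)), mul_one]
        rw [Finset.sum_congr rfl e, h1]
    · rintro ⟨h1, h2, h3⟩
      refine ⟨fun i => y i / (lam i - ρ), ⟨?_, ?_, ?_⟩, ?_⟩
      · have e : ∀ i ∈ Finset.univ, (y i / (lam i - ρ)) ^ 2 =
            y i ^ 2 / (lam i - ρ) ^ 2 := fun i _ => by rw [div_pow]
        rw [Finset.sum_congr rfl e, h3]
      · have e : ∀ i ∈ Finset.univ, lam i * (y i / (lam i - ρ)) ^ 2 =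
            y i ^ 2 / (lam i - ρ) + ρ * (y i ^ 2 / (lam i - ρ) ^ 2) := fun i _ => by
          field_simp [hc i, sub_ne_zero.mpr (Ne.symm (hρ i))]
          ring
        rw [Finset.sum_congr rfl e, Finset.sum_add_distrib, ← Finset.mul_sum, h2, h3]
        ring
      · have e : ∀ i ∈ Finset.univ, (lam i) ^ 2 * (y i / (lam i - ρ)) ^ 2 =
            y i ^ 2 + (2 * ρ) * (y i ^ 2 / (lam i - ρ)) + ρ ^ 2 * (y i ^ 2 / (lam i - ρ) ^ 2) :=
          fun i _ => by
          field_simp [hc i, sub_ne_zero.mpr (Ne.symm (hρ i))]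
          ring
        rw [Finset.sum_congr rfl e, Finset.sum_add_distrib, Finset.sum_add_distrib,
          ← Finset.mul_sum, ← Finset.mul_sum, h1, h2, h3]
        ring
      · funext i
        exact mul_div_cancel₀ (y i) (hc i)
end
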